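/- The minimum image based support (MNI) is anti-monotone under pattern reduction: if Q ≪ Q' (Q is a subpattern of Q', i.e., V_Q ⊆ V_{Q'} and E_Q ⊆ E_{Q'}), then for every graph G, mni(Q', G) ≤ mni(Q, G). -/

import Mathlib

structure LGraph (α L : Type*) where
  V : Set α
  E : Set (α × L × α)
  lab : α → L

structure LPattern (β L : Type*) where
  V : Set β
  E : Set (β × L × β)
  lab : β → L

/-- Isomorphic embeddings: injective (on pattern nodes), label-preserving
homomorphisms. -/
def Emb {β α L : Type*} (Q : LPattern β L) (G : LGraph α L) : Set (β → α) :=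
  {i | Set.InjOn i Q.V ∧
       (∀ v ∈ Q.V, i v ∈ G.V ∧ G.lab (i v) = Q.lab v) ∧
       (∀ e ∈ Q.E, (i e.1, e.2.1, i e.2.2) ∈ G.E)}

/-- The image set `M(v) = {i(v) : i ∈ I}` of a pattern node. -/
def ImgSet {β α L : Type*} (Q : LPattern β L) (G : LGraph α L) (v : β) : Set α :=
  (fun i => i v) '' Emb Q G

/-- `mni(Q,G)`: the minimum over `v ∈ V_Q` of `|M(v)|`. -/
noncomputable def mni {β α L : Type*} (Q : LPattern β L) (G : LGraph α L) : ℕ :=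
  sInf {n | ∃ v ∈ Q.V, n = (ImgSet Q G v).ncard}

def PatReduce {β L : Type*} (Q Q' : LPattern β L) : Prop :=
  Q.V ⊆ Q'.V ∧ Q.E ⊆ Q'.E ∧ Q.lab = Q'.lab

section

variable {β α L : Type*}

theorem PatReduce.emb_subset {Q Q' : LPattern β L} (hred : PatReduce Q Q') (G : LGraph α L) :
    Emb Q' G ⊆ Emb Q G := by
  obtain ⟨hV, hE, hlab⟩ := hred
  rintro i ⟨hinj, hmap, hedge⟩
  refine ⟨hinj.mono hV, fun v hv => ?_, fun e he => hedge e (hE he)⟩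
  rw [hlab]
  exact hmap v (hV hv)

theorem PatReduce.imgSet_subset {Q Q' : LPattern β L} (hred : PatReduce Q Q') (G : LGraph α L)
    (v : β) : ImgSet Q' G v ⊆ ImgSet Q G v :=
  Set.image_mono (hred.emb_subset G)

theorem mni_le_ncard_imgSet (Q : LPattern β L) (G : LGraph α L) {v : β} (hv : v ∈ Q.V) :
    mni Q G ≤ (ImgSet Q G v).ncard :=
  Nat.sInf_le ⟨v, hv, rfl⟩

theorem exists_mni_eq_ncard_imgSet {Q : LPattern β L} (G : LGraph α L) (hne : Q.V.Nonempty) :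
    ∃ v ∈ Q.V, mni Q G = (ImgSet Q G v).ncard := by
  obtain ⟨v, hv⟩ := hne
  exact Nat.sInf_mem (s := {n | ∃ v ∈ Q.V, n = (ImgSet Q G v).ncard}) ⟨_, v, hv, rfl⟩

end

/-- MNI is anti-monotone under pattern reduction. -/
theorem mni_antimonotone {β α L : Type*}
    (Q Q' : LPattern β L) (G : LGraph α L)
    (hfin : Finite α) (hne : Q.V.Nonempty)
    (hred : PatReduce Q Q') :
    mni Q' G ≤ mni Q G := by
  obtain ⟨v, hv, hmin⟩ := exists_mni_eq_ncard_imgSet G hne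
  calc mni Q' G ≤ (ImgSet Q' G v).ncard := mni_le_ncard_imgSet Q' G (hred.1 hv)
    -- `ncard` is `0` on infinite sets, so this monotonicity step relies on `Finite α`.
    _ ≤ (ImgSet Q G v).ncard := Set.ncard_le_ncard (hred.imgSet_subset G v)
    _ = mni Q G := hmin.symm
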